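/- arXiv:1206.4764 — 4 statements merged into one kernel-verified Lean document; each statement's English description precedes it below -/
import Mathlib

section
/- For every real number t ≥ 0 and all vectors p, k in ℝ^d, the inequality 2·exp(−t‖p‖²) − exp(−t‖p+k‖²) − exp(−t‖p−k‖²) ≤ 2·(1 − exp(−t‖k‖²)) holds. -/
/-!
Writing `a = exp (-t‖p‖²)`, `b = exp (-t‖k‖²)` and expanding `‖p ± k‖²`, the two shifted Gaussians
sum to `2ab cosh (2t⟪p, k⟫) ≥ 2ab`. The difference of the two sides is therefore at least
`2 (1 - a) (1 - b)`, which is nonnegative because `a` and `b` lie on the same side of `1`.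
-/

open Real

lemma mul_one_sub_exp_mul_nonneg (s : ℝ) {x y : ℝ} (hx : 0 ≤ x) (hy : 0 ≤ y) :
    0 ≤ (1 - exp (s * x)) * (1 - exp (s * y)) := by
  rcases le_total s 0 with hs | hs
  · exact mul_nonneg (sub_nonneg.2 (exp_le_one_iff.2 (mul_nonpos_of_nonpos_of_nonneg hs hx)))
      (sub_nonneg.2 (exp_le_one_iff.2 (mul_nonpos_of_nonpos_of_nonneg hs hy)))
  · exact mul_nonneg_of_nonpos_of_nonpos
      (sub_nonpos.2 (one_le_exp_iff.2 (mul_nonneg hs hx)))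
      (sub_nonpos.2 (one_le_exp_iff.2 (mul_nonneg hs hy)))

section InnerProductSpace

variable {E : Type*} [NormedAddCommGroup E] [InnerProductSpace ℝ E]

lemma exp_neg_mul_norm_add_sq_add_exp_neg_mul_norm_sub_sq (t : ℝ) (p k : E) :
    exp (-t * ‖p + k‖ ^ 2) + exp (-t * ‖p - k‖ ^ 2)
      = 2 * (exp (-t * ‖p‖ ^ 2) * exp (-t * ‖k‖ ^ 2)) * cosh (2 * t * inner ℝ p k) := by
  rw [cosh_eq, mul_div_assoc', mul_div_right_comm, mul_div_cancel_left₀ _ two_ne_zero, mul_add,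
    ← exp_add, ← exp_add, ← exp_add, norm_add_sq_real, norm_sub_sq_real]
  ring_nf

lemma two_mul_exp_neg_mul_norm_sq_le_add (t : ℝ) (p k : E) :
    2 * (exp (-t * ‖p‖ ^ 2) * exp (-t * ‖k‖ ^ 2))
      ≤ exp (-t * ‖p + k‖ ^ 2) + exp (-t * ‖p - k‖ ^ 2) := by
  rw [exp_neg_mul_norm_add_sq_add_exp_neg_mul_norm_sub_sq]
  exact le_mul_of_one_le_right (by positivity) (one_le_cosh _)

end InnerProductSpace

theorem exp_inequality_32_general (d : ℕ) (t : ℝ)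
    (p k : EuclideanSpace ℝ (Fin d)) :
    2 * Real.exp (-t * ‖p‖ ^ 2) - Real.exp (-t * ‖p + k‖ ^ 2)
      - Real.exp (-t * ‖p - k‖ ^ 2) ≤ 2 * (1 - Real.exp (-t * ‖k‖ ^ 2)) := by
  have hsum := two_mul_exp_neg_mul_norm_sq_le_add t p k
  have hsign := mul_one_sub_exp_mul_nonneg (-t) (sq_nonneg ‖p‖) (sq_nonneg ‖k‖)
  linarith

theorem exp_inequality_32 (d : ℕ) (t : ℝ) (ht : 0 ≤ t)
    (p k : EuclideanSpace ℝ (Fin d)) :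
    2 * Real.exp (-t * ‖p‖ ^ 2) - Real.exp (-t * ‖p + k‖ ^ 2)
      - Real.exp (-t * ‖p - k‖ ^ 2) ≤ 2 * (1 - Real.exp (-t * ‖k‖ ^ 2)) :=
  exp_inequality_32_general d t p k
end

section
/- For all real numbers p and κ, the inequality 2·exp(−p²) − exp(−(p+κ)²) − exp(−(p−κ)²) ≤ 2·(1 − exp(−κ²)) holds. -/
theorem exp_inequality_one_dim (p κ : ℝ) :
    2 * Real.exp (-p ^ 2) - Real.exp (-(p + κ) ^ 2) - Real.exp (-(p - κ) ^ 2)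
      ≤ 2 * (1 - Real.exp (-κ ^ 2)) := by
  have h1 : Real.exp (-(p + κ) ^ 2)
      = Real.exp (-p ^ 2) * Real.exp (-κ ^ 2) * Real.exp (-(2 * p * κ)) := by
    rw [← Real.exp_add, ← Real.exp_add]; ring_nf
  have h2 : Real.exp (-(p - κ) ^ 2)
      = Real.exp (-p ^ 2) * Real.exp (-κ ^ 2) * Real.exp (2 * p * κ) := by
    rw [← Real.exp_add, ← Real.exp_add]; ring_nf
  have ha : 0 < Real.exp (-p ^ 2) := Real.exp_pos _
  have hb : 0 < Real.exp (-κ ^ 2) := Real.exp_pos _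
  have ha1 : Real.exp (-p ^ 2) ≤ 1 := Real.exp_le_one_iff.2 (neg_nonpos.2 (sq_nonneg _))
  have hb1 : Real.exp (-κ ^ 2) ≤ 1 := Real.exp_le_one_iff.2 (neg_nonpos.2 (sq_nonneg _))
  have hs : 2 ≤ Real.exp (-(2 * p * κ)) + Real.exp (2 * p * κ) := by
    have h3 := Real.add_one_le_exp (2 * p * κ)
    have h4 := Real.add_one_le_exp (-(2 * p * κ))
    linarith
  nlinarith [mul_pos ha hb, mul_nonneg (mul_nonneg ha.le hb.le) (sub_nonneg.2 hs),
    mul_nonneg (sub_nonneg.2 ha1) (sub_nonneg.2 hb1)]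
end

section
/- Let a ≥ 0 and b ≥ 0 be real numbers and μ a (nonnegative) Borel measure on [0,∞) with ∫₀^∞ min(t,1) μ(dt) < ∞, and define B : [0,∞) → ℝ by B(u) = a + b·u + ∫₀^∞ (1 − exp(−t·u)) μ(dt). Then for all vectors p, k in ℝ^d, the inequality (1/2)·(B(‖p+k‖²) + B(‖p−k‖²) − 2·B(‖p‖²)) ≤ B(‖k‖²) holds. -/
open MeasureTheory

lemma bernstein_aux_integrable (μ : Measure ℝ)
    (hμ : IntegrableOn (fun t => min t 1) (Set.Ici 0) μ) (u : ℝ) (hu : 0 ≤ u) :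
    IntegrableOn (fun t => 1 - Real.exp (-(t * u))) (Set.Ici 0) μ := by
  have hbound : IntegrableOn (fun t => (max u 1) * min t 1) (Set.Ici 0) μ :=
    hμ.const_mul _
  refine hbound.mono' ?_ ?_
  · exact (continuous_const.sub ((continuous_id.mul continuous_const).neg.rexp)).aestronglyMeasurable
  · filter_upwards [ae_restrict_mem measurableSet_Ici] with t ht
    have htu : 0 ≤ t * u := mul_nonneg ht hu
    have h1 : Real.exp (-(t * u)) ≤ 1 := Real.exp_le_one_iff.2 (by linarith)
    have h2 : 1 - t * u ≤ Real.exp (-(t * u)) := by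
      have := Real.add_one_le_exp (-(t * u)); linarith
    have h3 : 0 < Real.exp (-(t * u)) := Real.exp_pos _
    rw [Real.norm_eq_abs, abs_of_nonneg (by linarith)]
    rcases le_total t 1 with ht1 | ht1
    · rw [min_eq_left ht1]
      have : t * u ≤ max u 1 * t := by
        have := mul_le_mul_of_nonneg_right (le_max_left u 1) ht
        linarith
      linarith
    · rw [min_eq_right ht1]
      have : (1:ℝ) ≤ max u 1 := le_max_right _ _
      nlinarith

theorem bernstein_representation_ineq (d : ℕ) (a b : ℝ) (ha : 0 ≤ a) (hb : 0 ≤ b)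
    (μ : Measure ℝ)
    (hμ : IntegrableOn (fun t => min t 1) (Set.Ici 0) μ)
    (B : ℝ → ℝ)
    (hB : ∀ u : ℝ, 0 ≤ u →
      B u = a + b * u + ∫ t in Set.Ici (0:ℝ), (1 - Real.exp (-(t * u))) ∂μ)
    (p k : EuclideanSpace ℝ (Fin d)) :
    (1 / 2) * (B (‖p + k‖ ^ 2) + B (‖p - k‖ ^ 2) - 2 * B (‖p‖ ^ 2)) ≤ B (‖k‖ ^ 2) := by
  set x : ℝ := ‖p‖ ^ 2 with hxdef
  set y : ℝ := ‖k‖ ^ 2 with hydef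
  set up : ℝ := ‖p + k‖ ^ 2 with hupdef
  set um : ℝ := ‖p - k‖ ^ 2 with humdef
  have hx : (0:ℝ) ≤ x := sq_nonneg _
  have hy : (0:ℝ) ≤ y := sq_nonneg _
  have hup : (0:ℝ) ≤ up := sq_nonneg _
  have hum : (0:ℝ) ≤ um := sq_nonneg _
  have hsum : up + um = 2 * x + 2 * y := by
    have h1 := norm_add_sq_real p k
    have h2 := norm_sub_sq_real p k
    simp only [hxdef, hydef, hupdef, humdef]
    rw [h1, h2]; ring
  have h1 := bernstein_aux_integrable μ hμ up hup
  have h2 := bernstein_aux_integrable μ hμ um hum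
  have h3 := bernstein_aux_integrable μ hμ x hx
  have h4 := bernstein_aux_integrable μ hμ y hy
  have hmono :
      ∫ t in Set.Ici (0:ℝ),
          ((1 - Real.exp (-(t * up))) + (1 - Real.exp (-(t * um)))) ∂μ ≤
      ∫ t in Set.Ici (0:ℝ),
          (2 * (1 - Real.exp (-(t * x))) + 2 * (1 - Real.exp (-(t * y)))) ∂μ := by
    refine setIntegral_mono_on (h1.add h2) ((h3.const_mul 2).add (h4.const_mul 2))
      measurableSet_Ici ?_
    intro t ht
    have ht0 : (0:ℝ) ≤ t := ht
    have hA : 0 < Real.exp (-(t * up)) := Real.exp_pos _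
    have hBv : 0 < Real.exp (-(t * um)) := Real.exp_pos _
    have hc : 0 < Real.exp (-(t * x)) := Real.exp_pos _
    have hd : 0 < Real.exp (-(t * y)) := Real.exp_pos _
    have hc1 : Real.exp (-(t * x)) ≤ 1 :=
      Real.exp_le_one_iff.2 (by nlinarith [mul_nonneg ht0 hx])
    have hd1 : Real.exp (-(t * y)) ≤ 1 :=
      Real.exp_le_one_iff.2 (by nlinarith [mul_nonneg ht0 hy])
    have key : Real.exp (-(t * up)) * Real.exp (-(t * um)) =
        (Real.exp (-(t * x)) * Real.exp (-(t * y))) ^ 2 := by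
      rw [← Real.exp_add, sq, ← Real.exp_add, ← Real.exp_add]
      congr 1
      linear_combination (-t) * hsum
    have hamgm : 2 * (Real.exp (-(t * x)) * Real.exp (-(t * y))) ≤
        Real.exp (-(t * up)) + Real.exp (-(t * um)) := by
      nlinarith [sq_nonneg (Real.exp (-(t * up)) - Real.exp (-(t * um))), key,
        mul_pos hc hd, add_pos hA hBv]
    nlinarith [mul_nonneg (sub_nonneg.2 hc1) (sub_nonneg.2 hd1)]
  rw [integral_add h1 h2, integral_add (h3.const_mul 2) (h4.const_mul 2),
    integral_const_mul, integral_const_mul] at hmono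
  rw [hB up hup, hB um hum, hB x hx, hB y hy]
  have hbsum : b * (up + um) = b * (2 * x + 2 * y) := by rw [hsum]
  linarith [hmono, hbsum, ha]
end

section
/- Let B : [0,∞) → ℝ be infinitely differentiable on (0,∞) and continuous at 0, with B(u) ≥ 0 for all u ≥ 0, B(0) = 0, and (−1)^{n−1}·B^{(n)}(u) ≥ 0 for all u > 0 and all integers n ≥ 1 (i.e., B is a Bernstein function). Then for all vectors p, k in ℝ^d, the inequality (1/2)·(B(‖p+k‖²) + B(‖p−k‖²) − 2·B(‖p‖²)) ≤ B(‖k‖²) holds. -/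
theorem bernstein_ineq (d : ℕ) (B : ℝ → ℝ)
    (hsmooth : ContDiffOn ℝ (⊤ : ℕ∞) B (Set.Ioi 0))
    (hcont : ContinuousWithinAt B (Set.Ici 0) 0)
    (hnonneg : ∀ u : ℝ, 0 ≤ u → 0 ≤ B u)
    (hzero : B 0 = 0)
    (halt : ∀ (n : ℕ), 1 ≤ n → ∀ u : ℝ, 0 < u →
      0 ≤ (-1 : ℝ) ^ (n - 1) * iteratedDerivWithin n B (Set.Ioi 0) u)
    (p k : EuclideanSpace ℝ (Fin d)) :
    (1 / 2) * (B (‖p + k‖ ^ 2) + B (‖p - k‖ ^ 2) - 2 * B (‖p‖ ^ 2)) ≤ B (‖k‖ ^ 2) := by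
  -- Continuity of B on [0, ∞)
  have hcontOn : ContinuousOn B (Set.Ici 0) := by
    intro x hx
    rcases eq_or_lt_of_le (Set.mem_Ici.mp hx : (0:ℝ) ≤ x) with h | h
    · rw [← h]; exact hcont
    · exact ((hsmooth.continuousOn x h).continuousAt
        (Ioi_mem_nhds h)).continuousWithinAt
  -- Second derivative is nonpositive on (0, ∞)
  have hderivEq : ∀ u : ℝ, 0 < u →
      iteratedDerivWithin 2 B (Set.Ioi 0) u = iteratedDeriv 2 B u := by
    intro u hu
    simp only [iteratedDerivWithin, iteratedDeriv,
      iteratedFDerivWithin_of_isOpen 2 isOpen_Ioi (Set.mem_Ioi.mpr hu)]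
  have h2 : ∀ x ∈ interior (Set.Ici (0:ℝ)), deriv^[2] B x ≤ 0 := by
    intro x hx
    rw [interior_Ici] at hx
    have := halt 2 (by norm_num) x hx
    rw [hderivEq x hx, iteratedDeriv_eq_iterate] at this
    simpa using this
  -- Differentiability
  have hdiff : DifferentiableOn ℝ B (interior (Set.Ici (0:ℝ))) := by
    rw [interior_Ici]
    exact hsmooth.differentiableOn (by simp)
  have hdiff2 : DifferentiableOn ℝ (deriv B) (interior (Set.Ici (0:ℝ))) := by
    rw [interior_Ici]
    exact (hsmooth.deriv_of_isOpen (m := 1) isOpen_Ioi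
      (WithTop.coe_le_coe.mpr le_top)).differentiableOn one_ne_zero
  have hconc : ConcaveOn ℝ (Set.Ici 0) B :=
    concaveOn_of_deriv2_nonpos (convex_Ici 0) hcontOn hdiff hdiff2 h2
  -- Subadditivity: B (a + b) ≤ B a + B b for a b ≥ 0
  have hsub : ∀ a b : ℝ, 0 ≤ a → 0 ≤ b → B (a + b) ≤ B a + B b := by
    intro a b ha hb
    rcases eq_or_lt_of_le (add_nonneg ha hb) with h | h
    · rw [← h]; rw [hzero]
      have : a = 0 ∧ b = 0 := by constructor <;> linarith
      rw [this.1, this.2, hzero]; norm_num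
    · have hmem : (a + b) ∈ Set.Ici (0:ℝ) := le_of_lt h
      have h0 : (0:ℝ) ∈ Set.Ici (0:ℝ) := Set.self_mem_Ici
      have hwa : 0 ≤ a / (a + b) := div_nonneg ha h.le
      have hwb : 0 ≤ b / (a + b) := div_nonneg hb h.le
      have e1 : a / (a + b) * (a + b) + b / (a + b) * 0 = a := by
        field_simp; ring
      have e2 : b / (a + b) * (a + b) + a / (a + b) * 0 = b := by
        field_simp; ring
      have s1 : a / (a + b) + b / (a + b) = 1 := by field_simp
      have ca := hconc.2 hmem h0 hwa hwb s1
      have cb := hconc.2 hmem h0 hwb hwa (by linarith)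
      simp only [smul_eq_mul] at ca cb
      rw [e1] at ca
      rw [e2] at cb
      rw [hzero] at ca cb
      have : (a / (a + b) + b / (a + b)) * B (a + b) ≤ B a + B b := by
        nlinarith
      rw [s1, one_mul] at this
      exact this
  -- Parallelogram law
  set a := ‖p‖ ^ 2 with ha
  set b := ‖k‖ ^ 2 with hb
  have ha0 : 0 ≤ a := sq_nonneg _
  have hb0 : 0 ≤ b := sq_nonneg _
  have hx0 : (0:ℝ) ≤ ‖p + k‖ ^ 2 := sq_nonneg _
  have hy0 : (0:ℝ) ≤ ‖p - k‖ ^ 2 := sq_nonneg _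
  have hpar : ‖p + k‖ ^ 2 + ‖p - k‖ ^ 2 = 2 * a + 2 * b := by
    rw [norm_add_sq_real, norm_sub_sq_real]; ring
  -- Midpoint concavity
  have hmid := hconc.2 (Set.mem_Ici.mpr hx0) (Set.mem_Ici.mpr hy0)
    (by norm_num : (0:ℝ) ≤ 1/2) (by norm_num : (0:ℝ) ≤ 1/2) (by norm_num)
  simp only [smul_eq_mul] at hmid
  have hmidpt : (1/2 : ℝ) * ‖p + k‖ ^ 2 + (1/2 : ℝ) * ‖p - k‖ ^ 2 = a + b := by
    linarith
  rw [hmidpt] at hmid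
  have := hsub a b ha0 hb0
  linarith
end
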